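/- Let I' be an independent set obtained from an independent set I of a graph G by adding a vertex (I ⊆ I'). If a token on u ∈ I is (G,I)-rigid, then it is (G,I')-rigid. (Adding tokens cannot make a rigid token movable.) -/

import Mathlib

/-- `I` is an independent set of `G`. -/
def IndepSet {V : Type*} (G : SimpleGraph V) (I : Set V) : Prop :=
  ∀ ⦃u⦄, u ∈ I → ∀ ⦃v⦄, v ∈ I → ¬ G.Adj u v

/-- `B` is obtained from `A` by sliding one token along an edge. -/
def Slide {V : Type*} (G : SimpleGraph V) (A B : Set V) : Prop :=
  ∃ u v, G.Adj u v ∧ A \ B = {u} ∧ B \ A = {v}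

/-- One step of reconfiguration: a slide whose result is independent. -/
def Step {V : Type*} (G : SimpleGraph V) (A B : Set V) : Prop :=
  IndepSet G B ∧ Slide G A B

/-- `I` is reconfigurable to `J` by token sliding. -/
def Reconf {V : Type*} (G : SimpleGraph V) : Set V → Set V → Prop :=
  Relation.ReflTransGen (Step G)

/-- One reconfiguration step restricted to the induced subgraph on `S`. -/
def StepOn {V : Type*} (G : SimpleGraph V) (S : Set V) (A B : Set V) : Prop :=
  B ⊆ S ∧ IndepSet G B ∧ Slide G A B

/-- Reconfigurability within the induced subgraph on `S`. -/
def ReconfOn {V : Type*} (G : SimpleGraph V) (S : Set V) : Set V → Set V → Prop :=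
  Relation.ReflTransGen (StepOn G S)

/-- The token on `u` is `(G, I)`-rigid. -/
def Rigid {V : Type*} (G : SimpleGraph V) (I : Set V) (u : V) : Prop :=
  ∀ J, Reconf G I J → u ∈ J

/-- The token on `u` is rigid for the subgraph induced on `S`, starting from `I ∩ S`. -/
def RigidOn {V : Type*} (G : SimpleGraph V) (S I : Set V) (u : V) : Prop :=
  ∀ J, ReconfOn G S (I ∩ S) J → u ∈ J

/-- The set `R(I)` of vertices carrying `(G, I)`-rigid tokens. -/
def RigidSet {V : Type*} (G : SimpleGraph V) (I : Set V) : Set V :=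
  {u ∈ I | Rigid G I u}

/-- For an edge `{u, v}` of a tree `G`, `SubtreeSide G u v` is the vertex set of the
subtree `T_v^u`: the component of `v` after removing the edge, i.e. vertices strictly
closer to `v` than to `u`. -/
def SubtreeSide {V : Type*} (G : SimpleGraph V) (u v : V) : Set V :=
  {x | G.dist x v < G.dist x u}

/-- The closed neighborhood `N[R]` of a vertex subset `R`. -/
def ClosedNbhd {V : Type*} (G : SimpleGraph V) (R : Set V) : Set V :=
  R ∪ {x | ∃ r ∈ R, G.Adj r x}

/-! Follow only the tokens that started on `I`: each slide of a configuration from `I'` either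
moves one of them, which is then a legal slide of that sub-configuration, or none of them.
Hence every configuration reachable from `I'` contains one reachable from `I`, and so contains `u`. -/

section

variable {V : Type*} {G : SimpleGraph V} {A B J : Set V} {u v : V}

theorem IndepSet.mono (hB : IndepSet G B) (hAB : A ⊆ B) : IndepSet G A :=
  fun _ hx _ hy => hB (hAB hx) (hAB hy)

theorem diff_singleton_subset_of_diff_eq (h : A \ B = {u}) : A \ {u} ⊆ B :=
  Set.sdiff_subset_iff.mpr <| (Set.sdiff_subset_iff.mp h.le).trans (Set.union_comm _ _).le

theorem slide_insert_diff_singleton (huv : G.Adj u v) (hu : u ∈ J) (hv : v ∉ J) :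
    Slide G J (insert v (J \ {u})) := by
  refine ⟨u, v, huv, ?_, ?_⟩
  · ext x
    simp only [Set.mem_sdiff, Set.mem_insert_iff, Set.mem_singleton_iff]
    constructor
    · rintro ⟨hxJ, hx⟩
      by_contra hxu
      exact hx (Or.inr ⟨hxJ, hxu⟩)
    · rintro rfl
      exact ⟨hu, by simp [G.ne_of_adj huv]⟩
  · ext x
    simp only [Set.mem_sdiff, Set.mem_insert_iff, Set.mem_singleton_iff]
    constructor
    · rintro ⟨rfl | ⟨hxJ, _⟩, hxJ'⟩
      · rfl
      · exact absurd hxJ hxJ'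
    · rintro rfl
      exact ⟨Or.inl rfl, hv⟩

theorem Step.exists_reflGen_subset (hstep : Step G A B) (hJ : J ⊆ A) :
    ∃ J', Relation.ReflGen (Step G) J J' ∧ J' ⊆ B := by
  obtain ⟨hB, u, v, huv, hAB, hBA⟩ := hstep
  have hv : v ∈ B ∧ v ∉ A := (hBA ▸ rfl : v ∈ B \ A)
  have hkept : A \ {u} ⊆ B := diff_singleton_subset_of_diff_eq hAB
  by_cases huJ : u ∈ J
  · have hsub : insert v (J \ {u}) ⊆ B :=
      Set.insert_subset hv.1 ((Set.sdiff_subset_sdiff_left hJ).trans hkept)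
    exact ⟨_, .single ⟨hB.mono hsub, slide_insert_diff_singleton huv huJ (hv.2 <| hJ ·)⟩, hsub⟩
  · exact ⟨J, .refl, (Set.subset_sdiff_singleton hJ huJ).trans hkept⟩

theorem Reconf.exists_reconf_subset (h : Reconf G A B) (hJ : J ⊆ A) :
    ∃ J', Reconf G J J' ∧ J' ⊆ B := by
  induction h with
  | refl => exact ⟨J, .refl, hJ⟩
  | tail _ hstep ih =>
    obtain ⟨J₁, hJJ₁, hJ₁⟩ := ih
    obtain ⟨J₂, hJ₁J₂, hJ₂⟩ := hstep.exists_reflGen_subset hJ₁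
    exact ⟨J₂, hJJ₁.trans hJ₁J₂.to_reflTransGen, hJ₂⟩

end

theorem rigid_of_superset_general {V : Type*} (G : SimpleGraph V) (I I' : Set V)
    (hsub : I ⊆ I')
    (u : V) (h : Rigid G I u) :
    Rigid G I' u := by
  intro J' hJ'
  obtain ⟨J, hJ, hJJ'⟩ := hJ'.exists_reconf_subset hsub
  exact hJJ' (h J hJ)

theorem rigid_of_superset {V : Type*} (G : SimpleGraph V) (I I' : Set V)
    (hI : IndepSet G I) (hI' : IndepSet G I') (hsub : I ⊆ I')
    (u : V) (hu : u ∈ I) (h : Rigid G I u) :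
    Rigid G I' u :=
  rigid_of_superset_general G I I' hsub u h
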